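/- arXiv:0803.1067 — 2 statements merged into one kernel-verified Lean document; each statement's English description precedes it below -/
import Mathlib

section
/- For α > 0, k a positive integer, λ > 0, and 0 ≤ x̄ ≤ t (set x* = t − x̄): ∫_{x̄}^{t} e^{-λs} (s − x̄)^{kα−1} Γ(α, λ(t − s)) ds = Γ(kα) Γ(α) e^{-λ x̄} λ^{-kα} [P(kα, λ x*) − P(kα + α, λ x*)], where Γ(·,·) is the upper incomplete gamma function and P the regularized lower incomplete gamma function. -/
open Real

/-- Regularized lower incomplete gamma function `P(a,u)`. -/
noncomputable def regGamma (a u : ℝ) : ℝ :=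
  (1 / Real.Gamma a) * ∫ t in (0 : ℝ)..u, t ^ (a - 1) * Real.exp (-t)

/-- Upper incomplete gamma function `Γ(a,u)`. -/
noncomputable def upperGamma (a u : ℝ) : ℝ :=
  ∫ s in Set.Ioi u, s ^ (a - 1) * Real.exp (-s)

/-!
The substitution `v = λ (s - x̄)` turns the integral into
`e^{-λ x̄} λ^{-a} ∫₀^w v^{a-1} e^{-v} Γ(α, w - v) dv` with `a = kα`, `w = λ x*`.
Splitting `Γ(α, ·) = Γ(α) - γ(α, ·)` with the lower incomplete gamma `γ`, the first part is
`Γ(α) γ(a, w)`. The second is the integral of `v^{a-1} (s - v)^{α-1} e^{-s}` over the triangle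
`0 < v < s ≤ w`; integrating in `v` first gives the Beta integral `B(a, α) s^{a+α-1}`, so it
equals `B(a, α) γ(a + α, w)`. The order of integration is exchanged for nonnegative
`lintegral`s, where Tonelli needs no integrability hypotheses.
-/

open MeasureTheory Set ENNReal ProbabilityTheory

noncomputable def lowerGamma (a u : ℝ) : ℝ :=
  ∫ t in (0 : ℝ)..u, t ^ (a - 1) * Real.exp (-t)

section IncompleteGamma

variable {b : ℝ}

theorem integrableOn_rpow_mul_exp_neg_Ioi (hb : 0 < b) :
    IntegrableOn (fun t : ℝ => t ^ (b - 1) * Real.exp (-t)) (Ioi 0) :=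
  (Real.GammaIntegral_convergent hb).congr_fun (fun _ _ => mul_comm _ _) measurableSet_Ioi

-- Also for negative endpoints: there `Real.rpow` satisfies `|t ^ (b - 1)| ≤ |t| ^ (b - 1)`.
theorem intervalIntegrable_rpow_mul_exp_neg (hb : 0 < b) (x y : ℝ) :
    IntervalIntegrable (fun t : ℝ => t ^ (b - 1) * Real.exp (-t)) volume x y :=
  (intervalIntegral.intervalIntegrable_rpow' (by linarith)).mul_continuousOn
    (Real.continuous_exp.comp continuous_neg).continuousOn

theorem continuous_lowerGamma (hb : 0 < b) : Continuous (lowerGamma b) :=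
  intervalIntegral.continuous_primitive (intervalIntegrable_rpow_mul_exp_neg hb) 0

theorem lowerGamma_nonneg {u : ℝ} (hu : 0 ≤ u) : 0 ≤ lowerGamma b u :=
  intervalIntegral.integral_nonneg hu fun _ ht =>
    mul_nonneg (Real.rpow_nonneg ht.1 _) (Real.exp_nonneg _)

theorem upperGamma_eq_Gamma_sub_lowerGamma (hb : 0 < b) {u : ℝ} (hu : 0 ≤ u) :
    upperGamma b u = Real.Gamma b - lowerGamma b u := by
  rw [eq_sub_iff_add_eq, lowerGamma, upperGamma, Real.Gamma_eq_integral hb, add_comm,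
    ← intervalIntegral.integral_Ioi_sub_Ioi (integrableOn_rpow_mul_exp_neg_Ioi hb) hu,
    sub_add_cancel]
  exact setIntegral_congr_fun measurableSet_Ioi fun _ _ => mul_comm _ _

theorem regGamma_eq_lowerGamma_div (a u : ℝ) : regGamma a u = lowerGamma a u / Real.Gamma a :=
  one_div_mul_eq_div _ _

theorem lowerGamma_sub_eq_integral_Ioc {v w : ℝ} (hvw : v ≤ w) :
    lowerGamma b (w - v) = ∫ s in Ioc v w, (s - v) ^ (b - 1) * Real.exp (-(s - v)) := by
  rw [← intervalIntegral.integral_of_le hvw, intervalIntegral.integral_comp_sub_right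
    (fun t => t ^ (b - 1) * Real.exp (-t)), sub_self, lowerGamma]

theorem ofReal_lowerGamma_sub_eq_lintegral (hb : 0 < b) {v w : ℝ} (hvw : v ≤ w) :
    ENNReal.ofReal (lowerGamma b (w - v)) =
      ∫⁻ s in Ioc v w, ENNReal.ofReal ((s - v) ^ (b - 1) * Real.exp (-(s - v))) := by
  have hshift := (intervalIntegrable_rpow_mul_exp_neg hb 0 (w - v)).comp_sub_right v
  rw [zero_add, sub_add_cancel, intervalIntegrable_iff_integrableOn_Ioc_of_le hvw] at hshift
  rw [lowerGamma_sub_eq_integral_Ioc hvw, ofReal_integral_eq_lintegral_ofReal hshift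
    (ae_restrict_of_forall_mem measurableSet_Ioc fun s hs =>
      mul_nonneg (Real.rpow_nonneg (sub_nonneg.mpr hs.1.le) _) (Real.exp_nonneg _))]

end IncompleteGamma

theorem integral_rpow_mul_sub_rpow {a b s : ℝ} (ha : 0 < a) (hb : 0 < b) (hs : 0 < s) :
    ∫ v in (0 : ℝ)..s, v ^ (a - 1) * (s - v) ^ (b - 1) = s ^ (a + b - 1) * beta a b := by
  have h := Complex.betaIntegral_scaled a b hs
  rw [Complex.betaIntegral_eq_Gamma_mul_div _ _ (by simpa) (by simpa)] at h
  apply Complex.ofReal_injective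
  rw [← intervalIntegral.integral_ofReal]
  convert h using 1
  · refine intervalIntegral.integral_congr fun v hv => ?_
    rw [uIcc_of_le hs.le] at hv
    push_cast
    rw [Complex.ofReal_cpow hv.1, Complex.ofReal_cpow (sub_nonneg.mpr hv.2)]
    push_cast
    rfl
  · push_cast [beta, Complex.ofReal_cpow hs.le, ← Complex.Gamma_ofReal]
    rfl

theorem lintegral_Ioc_lintegral_Ioc_swap {f : ℝ → ℝ → ℝ≥0∞}
    (hf : Measurable (Function.uncurry f)) (w : ℝ) :
    ∫⁻ v in Ioc 0 w, ∫⁻ s in Ioc v w, f v s =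
      ∫⁻ s in Ioc 0 w, ∫⁻ v in Ioo 0 s, f v s := by
  set K : ℝ → ℝ → ℝ≥0∞ := fun v s =>
    {p : ℝ × ℝ | p.1 < p.2}.indicator (Function.uncurry f) (v, s)
  have hK : Measurable (Function.uncurry K) :=
    hf.indicator (measurableSet_lt measurable_fst measurable_snd)
  calc ∫⁻ v in Ioc 0 w, ∫⁻ s in Ioc v w, f v s
      = ∫⁻ v in Ioc 0 w, ∫⁻ s in Ioc 0 w, K v s := by
        refine setLIntegral_congr_fun measurableSet_Ioc fun v hv => ?_
        have hK : K v = (Ioi v).indicator (f v) := rfl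
        rw [hK, lintegral_indicator measurableSet_Ioi, Measure.restrict_restrict measurableSet_Ioi,
          inter_comm, Ioc_inter_Ioi, sup_eq_right.mpr hv.1.le]
    _ = ∫⁻ s in Ioc 0 w, ∫⁻ v in Ioc 0 w, K v s := lintegral_lintegral_swap hK.aemeasurable
    _ = ∫⁻ s in Ioc 0 w, ∫⁻ v in Ioo 0 s, f v s := by
        refine setLIntegral_congr_fun measurableSet_Ioc fun s hs => ?_
        have hK : (K · s) = (Iio s).indicator (f · s) := rfl
        have hset : Iio s ∩ Ioc 0 w = Ioo 0 s := by
          ext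
          simp only [mem_inter_iff, mem_Iio, mem_Ioc, mem_Ioo]
          grind
        rw [hK, lintegral_indicator measurableSet_Iio, Measure.restrict_restrict measurableSet_Iio,
          hset]

theorem lintegral_Ioo_rpow_mul_sub_rpow {a b s : ℝ} (ha : 0 < a) (hb : 0 < b) (hs : 0 < s) :
    ∫⁻ v in Ioo 0 s, ENNReal.ofReal (v ^ (a - 1) * (s - v) ^ (b - 1)) =
      ENNReal.ofReal (s ^ (a + b - 1) * beta a b) := by
  have hint : IntervalIntegrable (fun v : ℝ => v ^ (a - 1) * (s - v) ^ (b - 1)) volume 0 s := by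
    refine intervalIntegral.intervalIntegrable_of_integral_ne_zero ?_
    rw [integral_rpow_mul_sub_rpow ha hb hs]
    exact (mul_pos (Real.rpow_pos_of_pos hs _) (beta_pos ha hb)).ne'
  rw [setLIntegral_congr Ioo_ae_eq_Ioc, ← integral_rpow_mul_sub_rpow ha hb hs,
    intervalIntegral.integral_of_le hs.le]
  refine (ofReal_integral_eq_lintegral_ofReal
    ((intervalIntegrable_iff_integrableOn_Ioc_of_le hs.le).mp hint) ?_).symm
  exact ae_restrict_of_forall_mem measurableSet_Ioc fun v hv =>
    mul_nonneg (Real.rpow_nonneg hv.1.le _) (Real.rpow_nonneg (sub_nonneg.mpr hv.2) _)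

section Convolution

variable {a b w : ℝ}

theorem lintegral_rpow_mul_exp_neg_mul_lowerGamma (ha : 0 < a) (hb : 0 < b) (hw : 0 ≤ w) :
    ∫⁻ v in Ioc 0 w, ENNReal.ofReal (v ^ (a - 1) * Real.exp (-v) * lowerGamma b (w - v)) =
      ENNReal.ofReal (beta a b * lowerGamma (a + b) w) := by
  set k : ℝ → ℝ → ℝ≥0∞ := fun v s => ENNReal.ofReal (v ^ (a - 1) * Real.exp (-v)) *
    ENNReal.ofReal ((s - v) ^ (b - 1) * Real.exp (-(s - v)))
  calc _ = ∫⁻ v in Ioc 0 w, ∫⁻ s in Ioc v w, k v s := by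
        refine setLIntegral_congr_fun measurableSet_Ioc fun v hv => ?_
        rw [ENNReal.ofReal_mul (mul_nonneg (Real.rpow_nonneg hv.1.le _) (Real.exp_nonneg _)),
          ofReal_lowerGamma_sub_eq_lintegral hb hv.2, ← lintegral_const_mul _ (by fun_prop)]
    _ = ∫⁻ s in Ioc 0 w, ∫⁻ v in Ioo 0 s, k v s :=
        lintegral_Ioc_lintegral_Ioc_swap (by fun_prop) w
    _ = ∫⁻ s in Ioc 0 w, ENNReal.ofReal (beta a b * (s ^ (a + b - 1) * Real.exp (-s))) := by
        refine setLIntegral_congr_fun measurableSet_Ioc fun s hs => ?_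
        have hk : ∀ v ∈ Ioo 0 s, k v s =
            ENNReal.ofReal (v ^ (a - 1) * (s - v) ^ (b - 1)) * ENNReal.ofReal (Real.exp (-s)) := by
          intro v hv
          have hv0 := Real.rpow_nonneg hv.1.le (a - 1)
          have hsv := Real.rpow_nonneg (sub_nonneg.mpr hv.2.le) (b - 1)
          simp only [k]
          rw [← ENNReal.ofReal_mul (by positivity), ← ENNReal.ofReal_mul (by positivity),
            show -s = -v + -(s - v) by ring, Real.exp_add]
          ring_nf
        rw [setLIntegral_congr_fun measurableSet_Ioo hk, lintegral_mul_const _ (by fun_prop),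
          lintegral_Ioo_rpow_mul_sub_rpow ha hb hs.1, ← ENNReal.ofReal_mul
            (mul_nonneg (Real.rpow_nonneg hs.1.le _) (beta_pos ha hb).le)]
        ring_nf
    _ = _ := by
        rw [← ofReal_integral_eq_lintegral_ofReal, integral_const_mul, lowerGamma,
          intervalIntegral.integral_of_le hw]
        · exact ((integrableOn_rpow_mul_exp_neg_Ioi (by linarith)).mono_set
            Ioc_subset_Ioi_self).const_mul _
        · exact ae_restrict_of_forall_mem measurableSet_Ioc fun s hs =>
            mul_nonneg (beta_pos ha hb).le
              (mul_nonneg (Real.rpow_nonneg hs.1.le _) (Real.exp_nonneg _))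

theorem measurable_rpow_mul_exp_neg_mul_lowerGamma (hb : 0 < b) (w : ℝ) :
    Measurable fun v : ℝ => v ^ (a - 1) * Real.exp (-v) * lowerGamma b (w - v) :=
  ((measurable_id.pow_const _).mul (by fun_prop)).mul
    ((continuous_lowerGamma hb).measurable.comp (measurable_const.sub measurable_id))

theorem rpow_mul_exp_neg_mul_lowerGamma_nonneg {v : ℝ} (hv : v ∈ Ioc 0 w) :
    0 ≤ v ^ (a - 1) * Real.exp (-v) * lowerGamma b (w - v) :=
  mul_nonneg (mul_nonneg (Real.rpow_nonneg hv.1.le _) (Real.exp_nonneg _))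
    (lowerGamma_nonneg (sub_nonneg.mpr hv.2))

theorem intervalIntegrable_rpow_mul_exp_neg_mul_lowerGamma (ha : 0 < a) (hb : 0 < b)
    (hw : 0 ≤ w) :
    IntervalIntegrable (fun v : ℝ => v ^ (a - 1) * Real.exp (-v) * lowerGamma b (w - v))
      volume 0 w := by
  refine (intervalIntegrable_iff_integrableOn_Ioc_of_le hw).mpr
    ⟨(measurable_rpow_mul_exp_neg_mul_lowerGamma hb w).aestronglyMeasurable, ?_⟩
  rw [hasFiniteIntegral_iff_ofReal (ae_restrict_of_forall_mem measurableSet_Ioc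
    fun _ => rpow_mul_exp_neg_mul_lowerGamma_nonneg),
    lintegral_rpow_mul_exp_neg_mul_lowerGamma ha hb hw]
  exact ofReal_lt_top

theorem integral_rpow_mul_exp_neg_mul_lowerGamma (ha : 0 < a) (hb : 0 < b) (hw : 0 ≤ w) :
    ∫ v in (0 : ℝ)..w, v ^ (a - 1) * Real.exp (-v) * lowerGamma b (w - v) =
      beta a b * lowerGamma (a + b) w := by
  rw [intervalIntegral.integral_of_le hw, integral_eq_lintegral_of_nonneg_ae
    (ae_restrict_of_forall_mem measurableSet_Ioc fun _ => rpow_mul_exp_neg_mul_lowerGamma_nonneg)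
    (measurable_rpow_mul_exp_neg_mul_lowerGamma hb w).aestronglyMeasurable,
    lintegral_rpow_mul_exp_neg_mul_lowerGamma ha hb hw,
    toReal_ofReal (mul_nonneg (beta_pos ha hb).le (lowerGamma_nonneg hw))]

theorem integral_rpow_mul_exp_neg_mul_upperGamma (ha : 0 < a) (hb : 0 < b) (hw : 0 ≤ w) :
    ∫ v in (0 : ℝ)..w, v ^ (a - 1) * Real.exp (-v) * upperGamma b (w - v) =
      Real.Gamma a * Real.Gamma b * (regGamma a w - regGamma (a + b) w) := by
  calc _ = ∫ v in (0 : ℝ)..w, (Real.Gamma b * (v ^ (a - 1) * Real.exp (-v)) -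
        v ^ (a - 1) * Real.exp (-v) * lowerGamma b (w - v)) := by
        refine intervalIntegral.integral_congr fun v hv => ?_
        rw [uIcc_of_le hw] at hv
        simp only [upperGamma_eq_Gamma_sub_lowerGamma hb (sub_nonneg.mpr hv.2)]
        ring
    _ = Real.Gamma b * lowerGamma a w - beta a b * lowerGamma (a + b) w := by
        rw [intervalIntegral.integral_sub
          ((intervalIntegrable_rpow_mul_exp_neg ha 0 w).const_mul _)
          (intervalIntegrable_rpow_mul_exp_neg_mul_lowerGamma ha hb hw),
          intervalIntegral.integral_const_mul, integral_rpow_mul_exp_neg_mul_lowerGamma ha hb hw]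
        rfl
    _ = _ := by
        have := (Real.Gamma_pos_of_pos ha).ne'
        have := (Real.Gamma_pos_of_pos (add_pos ha hb)).ne'
        simp only [regGamma_eq_lowerGamma_div, beta]
        field_simp

end Convolution

theorem integral_exp_mul_sub_rpow_mul_comp (g : ℝ → ℝ) (a : ℝ) {l xbar t : ℝ} (hl : 0 < l)
    (hxt : xbar ≤ t) :
    ∫ s in xbar..t, Real.exp (-l * s) * (s - xbar) ^ (a - 1) * g (l * (t - s)) =
      Real.exp (-l * xbar) * l ^ (-a) *
        ∫ v in (0 : ℝ)..l * (t - xbar),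
          v ^ (a - 1) * Real.exp (-v) * g (l * (t - xbar) - v) := by
  set h : ℝ → ℝ := fun v => v ^ (a - 1) * Real.exp (-v) * g (l * (t - xbar) - v)
  have hsubst := intervalIntegral.integral_comp_mul_sub h hl.ne' (l * xbar) (a := xbar) (b := t)
  rw [sub_self, ← mul_sub, smul_eq_mul] at hsubst
  have hpow : l ^ (-a) * l * l ^ (a - 1) = 1 := by
    rw [mul_assoc, mul_comm l, ← Real.rpow_add_one hl.ne', ← Real.rpow_add hl]
    norm_num
  calc _ = ∫ s in xbar..t, Real.exp (-l * xbar) * l ^ (-a) * l * h (l * s - l * xbar) := by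
        refine intervalIntegral.integral_congr fun s hs => ?_
        rw [uIcc_of_le hxt] at hs
        have hexp : Real.exp (-l * s) = Real.exp (-l * xbar) * Real.exp (-(l * (s - xbar))) := by
          rw [← Real.exp_add]
          ring_nf
        simp only [h, ← mul_sub, Real.mul_rpow hl.le (sub_nonneg.mpr hs.1),
          show l * (t - xbar) - l * (s - xbar) = l * (t - s) by ring, hexp]
        linear_combination (-(Real.exp (-l * xbar) * Real.exp (-(l * (s - xbar))) *
          (s - xbar) ^ (a - 1) * g (l * (t - s)))) * hpow
    _ = _ := by
        rw [intervalIntegral.integral_const_mul, hsubst]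
        field_simp

theorem Ik_eval_general (α l xbar t : ℝ) (k : ℕ) (hα : 0 < α) (hk : 1 ≤ k) (hl : 0 < l)
    (hxt : xbar ≤ t) :
    (∫ s in xbar..t,
        Real.exp (-l * s) * (s - xbar) ^ ((k : ℝ) * α - 1) * upperGamma α (l * (t - s))) =
      Real.Gamma ((k : ℝ) * α) * Real.Gamma α * Real.exp (-l * xbar) * l ^ (-((k : ℝ) * α)) *
        (regGamma ((k : ℝ) * α) (l * (t - xbar)) -
          regGamma ((k : ℝ) * α + α) (l * (t - xbar))) := by
  have ha : 0 < (k : ℝ) * α := mul_pos (by exact_mod_cast hk) hα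
  rw [integral_exp_mul_sub_rpow_mul_comp _ _ hl hxt,
    integral_rpow_mul_exp_neg_mul_upperGamma ha hα (mul_nonneg hl.le (sub_nonneg.mpr hxt))]
  ring

/-- evaluation of `I_k`. -/
theorem Ik_eval (α l xbar t : ℝ) (k : ℕ) (hα : 0 < α) (hk : 1 ≤ k) (hl : 0 < l)
    (hx : 0 ≤ xbar) (hxt : xbar ≤ t) :
    (∫ s in xbar..t,
        Real.exp (-l * s) * (s - xbar) ^ ((k : ℝ) * α - 1) * upperGamma α (l * (t - s))) =
      Real.Gamma ((k : ℝ) * α) * Real.Gamma α * Real.exp (-l * xbar) * l ^ (-((k : ℝ) * α)) *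
        (regGamma ((k : ℝ) * α) (l * (t - xbar)) -
          regGamma ((k : ℝ) * α + α) (l * (t - xbar))) :=
  Ik_eval_general α l xbar t k hα hk hl hxt
end

section
/- Consider the alternating renewal counting process N_t with i.i.d. inter-renewal times T_{n} − T_{n−1} that are Gamma(λ, α) distributed, and let N_t = Σ_{n≥1} 1_{T_n ≤ t}. Then E[(−1)^{N_t}] = 1 + 2 Σ_{k=1}^{∞} (−1)^k P(kα, λ t), where P is the regularized lower incomplete gamma function. -/
open MeasureTheory ProbabilityTheory Real

/-- The `n`-th renewal time `T_n = X_1 + ... + X_n`. -/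
noncomputable def renewalTime {Ω : Type*} (X : ℕ → Ω → ℝ) (n : ℕ) (ω : Ω) : ℝ :=
  ∑ i ∈ Finset.range n, X i ω

/-- The renewal counting process `N_t = Σ_{n ≥ 1} 1_{T_n ≤ t}`. -/
noncomputable def renewalCount {Ω : Type*} (X : ℕ → Ω → ℝ) (t : ℝ) (ω : Ω) : ℕ :=
  Set.ncard {n : ℕ | renewalTime X (n + 1) ω ≤ t}

/-!
Almost surely only finitely many renewals occur before `t`: by independence and positivity,
`P(T_n ≤ t) ≤ P(X_1 ≤ t)^n`, which is summable. On that event the parity telescopes,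
`(-1)^{N_t} = 1 + 2 Σ_{k ≥ 1} (-1)^k 1{T_k ≤ t}`, and the partial sums are bounded by `1`, so
dominated convergence gives `E[(-1)^{N_t}] = 1 + 2 Σ_{k ≥ 1} (-1)^k P(T_k ≤ t)`. Finally
`T_k ~ Gamma(kα, λ)`, because gamma laws with a common rate are closed under convolution (the
convolution integral is a Beta integral after the substitution `y = z u`), so
`P(T_k ≤ t) = P(kα, λt)`.
-/

open Set Filter
open scoped ENNReal Topology

lemma lintegral_comp_mul_left_of_pos {c : ℝ} (hc : 0 < c) (f : ℝ → ℝ≥0∞) :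
    ∫⁻ x, f (c * x) = ENNReal.ofReal c⁻¹ * ∫⁻ x, f x := by
  calc ∫⁻ x, f (c * x) = ∫⁻ x, f x ∂(volume.map (c * ·)) :=
        (lintegral_map_equiv f (MeasurableEquiv.mulLeft₀ c hc.ne')).symm
    _ = ENNReal.ofReal c⁻¹ * ∫⁻ x, f x := by
      rw [Real.map_volume_mul_left hc.ne', abs_of_pos (inv_pos.2 hc), lintegral_smul_measure,
        smul_eq_mul]

section GammaDistribution

variable {a b r : ℝ}

-- `u ≠ 0, 1` because the densities need not vanish at the endpoints (`0 ^ 0 = 1`).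
lemma gammaPDF_mul_gammaPDF_sub (ha : 0 < a) (hb : 0 < b) (hr : 0 < r) {z u : ℝ} (hz : 0 < z)
    (hu₀ : u ≠ 0) (hu₁ : u ≠ 1) :
    gammaPDF a r (z * u) * gammaPDF b r (z - z * u) =
      ENNReal.ofReal (gammaPDFReal (a + b) r z / z) * betaPDF a b u := by
  rcases lt_or_gt_of_ne hu₀ with hu | hu
  · simp [gammaPDF_of_neg (mul_neg_of_pos_of_neg hz hu), betaPDF_eq_zero_of_nonpos hu.le]
  rcases lt_or_gt_of_ne hu₁ with hu' | hu'
  swap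
  · simp [gammaPDF_of_neg (show z - z * u < 0 by nlinarith), betaPDF_eq_zero_of_one_le hu'.le]
  have hzu : z - z * u = z * (1 - u) := by ring
  rw [hzu, gammaPDF_of_nonneg (by positivity), gammaPDF_of_nonneg (by nlinarith),
    betaPDF_of_pos_lt_one hu hu', gammaPDFReal, if_pos hz.le, ← ENNReal.ofReal_mul,
    ← ENNReal.ofReal_mul]
  · congr 1
    have h1u : 0 < 1 - u := by linarith
    have hGa := Gamma_pos_of_pos ha
    have hGb := Gamma_pos_of_pos hb
    have hGab := Gamma_pos_of_pos (add_pos ha hb)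
    rw [mul_rpow hz.le hu.le, mul_rpow hz.le h1u.le, rpow_add hr,
      show a + b - 1 = (a - 1) + (b - 1) + 1 by ring, rpow_add hz, rpow_add hz, rpow_one,
      show -(r * z) = -(r * (z * u)) + -(r * (z * (1 - u))) by ring, exp_add, beta]
    field_simp
  · positivity
  · have := Gamma_pos_of_pos ha
    have : 0 < z * u := by positivity
    positivity

lemma lconvolution_gammaPDF_of_pos (ha : 0 < a) (hb : 0 < b) (hr : 0 < r) {z : ℝ} (hz : 0 < z) :
    (gammaPDF a r ⋆ₗ gammaPDF b r) z = gammaPDF (a + b) r z := by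
  have h01 : ∀ᵐ u : ℝ, u ∉ ({0, 1} : Set ℝ) := (Set.toFinite _).countable.ae_notMem volume
  calc (gammaPDF a r ⋆ₗ gammaPDF b r) z
      = ENNReal.ofReal z * ∫⁻ u, gammaPDF a r (z * u) * gammaPDF b r (z - z * u) := by
        rw [lintegral_comp_mul_left_of_pos hz (fun y => gammaPDF a r y * gammaPDF b r (z - y)),
          ← mul_assoc, ← ENNReal.ofReal_mul hz.le, mul_inv_cancel₀ hz.ne', ENNReal.ofReal_one,
          one_mul, lconvolution_def]
        simp_rw [neg_add_eq_sub]
    _ = ENNReal.ofReal z *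
          (ENNReal.ofReal (gammaPDFReal (a + b) r z / z) * ∫⁻ u, betaPDF a b u) := by
        congr 1
        rw [← lintegral_const_mul' _ _ ENNReal.ofReal_ne_top]
        refine lintegral_congr_ae (h01.mono fun u hu => ?_)
        simp only [mem_insert_iff, mem_singleton_iff, not_or] at hu
        exact gammaPDF_mul_gammaPDF_sub ha hb hr hz hu.1 hu.2
    _ = gammaPDF (a + b) r z := by
        rw [lintegral_betaPDF_eq_one ha hb, mul_one, ← ENNReal.ofReal_mul hz.le,
          mul_div_cancel₀ _ hz.ne', gammaPDF]

lemma lconvolution_gammaPDF_ae_eq (ha : 0 < a) (hb : 0 < b) (hr : 0 < r) :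
    gammaPDF a r ⋆ₗ gammaPDF b r =ᵐ[volume] gammaPDF (a + b) r := by
  filter_upwards [(countable_singleton (0 : ℝ)).ae_notMem volume] with z hz
  rcases lt_or_gt_of_ne hz with hz | hz
  · rw [gammaPDF_of_neg hz, lconvolution_def]
    refine (lintegral_congr fun y => ?_).trans lintegral_zero
    rcases lt_or_ge y 0 with hy | hy
    · rw [gammaPDF_of_neg hy, zero_mul]
    · rw [gammaPDF_of_neg (show -y + z < 0 by linarith), mul_zero]
  · exact lconvolution_gammaPDF_of_pos ha hb hr hz

lemma gammaMeasure_conv_gammaMeasure (ha : 0 < a) (hb : 0 < b) (hr : 0 < r) :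
    gammaMeasure a r ∗ gammaMeasure b r = gammaMeasure (a + b) r := by
  rw [gammaMeasure, gammaMeasure, gammaMeasure,
    conv_withDensity_eq_lconvolution (f := gammaPDF a r) (g := gammaPDF b r)
      (measurable_gammaPDFReal a r).ennreal_ofReal (measurable_gammaPDFReal b r).ennreal_ofReal]
  exact withDensity_congr_ae (lconvolution_gammaPDF_ae_eq ha hb hr)

lemma regGamma_mul_eq_integral_gammaPDFReal (hr : 0 < r) {t : ℝ} (ht : 0 ≤ t) :
    regGamma a (r * t) = ∫ x in 0..t, gammaPDFReal a r x := by
  have h := intervalIntegral.smul_integral_comp_mul_left (fun s => s ^ (a - 1) * exp (-s)) r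
    (a := 0) (b := t)
  rw [mul_zero] at h
  rw [regGamma, ← h, smul_eq_mul, ← intervalIntegral.integral_const_mul,
    ← intervalIntegral.integral_const_mul]
  refine intervalIntegral.integral_congr fun x hx => ?_
  have hx : 0 ≤ x := by rw [uIcc_of_le ht] at hx; exact hx.1
  simp only [gammaPDFReal, if_pos hx, mul_rpow hr.le hx, rpow_sub_one hr.ne']
  field_simp

lemma cdf_gammaMeasure (ha : 0 < a) (hr : 0 < r) {t : ℝ} (ht : 0 ≤ t) :
    cdf (gammaMeasure a r) t = regGamma a (r * t) := by
  rw [cdf_gammaMeasure_eq_integral ha hr, regGamma_mul_eq_integral_gammaPDFReal hr ht,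
    intervalIntegral.integral_of_le ht, ← integral_Icc_eq_integral_Ioc,
    setIntegral_eq_of_subset_of_forall_sdiff_eq_zero measurableSet_Iic Icc_subset_Iic_self]
  intro x hx
  have hx : x < 0 := by
    by_contra! h
    exact hx.2 ⟨h, hx.1⟩
  simp [gammaPDFReal, hx.not_ge]

lemma gammaMeasure_Iio_zero : gammaMeasure a r (Iio 0) = 0 := by
  rw [gammaMeasure, withDensity_apply _ measurableSet_Iio, lintegral_gammaPDF_of_nonpos le_rfl]

lemma gammaMeasure_Iic_lt_one (ha : 0 < a) (hr : 0 < r) (t : ℝ) :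
    gammaMeasure a r (Iic t) < 1 := by
  have := isProbabilityMeasure_gammaMeasure ha hr
  have hIoi : 0 < gammaMeasure a r (Iic t)ᶜ := by
    rw [compl_Iic, gammaMeasure, withDensity_apply _ measurableSet_Ioi,
      lintegral_pos_iff_support (f := gammaPDF a r) (measurable_gammaPDFReal a r).ennreal_ofReal,
      Measure.restrict_apply' measurableSet_Ioi]
    refine lt_of_lt_of_le ?_ (measure_mono (s := Ioi (max t 0)) fun x hx => ?_)
    · simp
    · rw [mem_Ioi, max_lt_iff] at hx
      exact ⟨by simpa [gammaPDF] using gammaPDFReal_pos ha hr hx.2, hx.1⟩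
  rw [prob_compl_eq_one_sub measurableSet_Iic] at hIoi
  exact tsub_pos_iff_lt.1 hIoi

end GammaDistribution

lemma IsLowerSet.mem_iff_lt_ncard {S : Set ℕ} (hS : IsLowerSet S) (hS_ne : S ≠ univ)
    {k : ℕ} : k ∈ S ↔ k < S.ncard := by
  obtain h | ⟨n, rfl⟩ := hS.eq_univ_or_Iio
  · exact absurd h hS_ne
  · simp

lemma one_add_two_mul_sum_neg_one_pow (N : ℕ) :
    1 + 2 * ∑ k ∈ Finset.range N, (-1 : ℝ) ^ (k + 1) = (-1) ^ N := by
  induction N with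
  | zero => simp
  | succ N ih => rw [Finset.sum_range_succ, mul_add, ← add_assoc, ih]; ring

section Pathwise

variable {Ω : Type*} {X : ℕ → Ω → ℝ}

lemma renewalTime_eq_sum (n : ℕ) :
    renewalTime X n = ∑ i ∈ Finset.range n, X i := by
  ext ω
  simp [renewalTime]

lemma lt_renewalCount_iff {ω : Ω} (hX : ∀ i, 0 ≤ X i ω) {t : ℝ}
    (hfin : ∃ n, t < renewalTime X n ω) (k : ℕ) :
    k < renewalCount X t ω ↔ renewalTime X (k + 1) ω ≤ t := by
  have hmono : Monotone fun n => renewalTime X n ω := fun m n hmn =>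
    Finset.sum_le_sum_of_subset_of_nonneg (Finset.range_subset_range.2 hmn) fun i _ _ => hX i
  refine (IsLowerSet.mem_iff_lt_ncard (fun m n hnm hm => ?_) ?_).symm
  · exact (hmono (Nat.succ_le_succ hnm)).trans hm
  · obtain ⟨n, hn⟩ := hfin
    intro h
    have : n ∈ {k | renewalTime X (k + 1) ω ≤ t} := h ▸ mem_univ n
    exact (hn.trans_le (hmono n.le_succ)).not_ge this

lemma one_add_two_mul_sum_indicator_eq_neg_one_pow_min {ω : Ω} (hX : ∀ i, 0 ≤ X i ω) {t : ℝ}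
    (hfin : ∃ n, t < renewalTime X n ω) (n : ℕ) :
    1 + 2 * ∑ k ∈ Finset.range n,
        {ω | renewalTime X (k + 1) ω ≤ t}.indicator (fun _ => (-1 : ℝ) ^ (k + 1)) ω =
      (-1) ^ min n (renewalCount X t ω) := by
  have hterm : ∀ k,
      {ω | renewalTime X (k + 1) ω ≤ t}.indicator (fun _ => (-1 : ℝ) ^ (k + 1)) ω =
        if k < renewalCount X t ω then (-1) ^ (k + 1) else 0 := by
    intro k
    simp [indicator, lt_renewalCount_iff hX hfin]
  simp_rw [hterm, ← Finset.sum_filter]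
  rw [← one_add_two_mul_sum_neg_one_pow]
  congr 3
  ext k
  simp

end Pathwise

section Probability

variable {Ω : Type*} [MeasurableSpace Ω] {μ : Measure Ω} {X : ℕ → Ω → ℝ}

lemma ProbabilityTheory.iIndepFun.map_sum_range_eq_gammaMeasure {a r : ℝ} (ha : 0 < a)
    (hr : 0 < r) (hmeas : ∀ i, Measurable (X i)) (hindep : iIndepFun X μ)
    (hlaw : ∀ i, μ.map (X i) = gammaMeasure a r) (n : ℕ) :
    μ.map (∑ i ∈ Finset.range (n + 1), X i) = gammaMeasure ((n + 1) * a) r := by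
  have := hindep.isProbabilityMeasure
  induction n with
  | zero => simp [hlaw]
  | succ n ih =>
    rw [Finset.sum_range_succ,
      (hindep.indepFun_sum_range_succ hmeas (n + 1)).map_add_eq_map_conv_map (by fun_prop)
        (hmeas _), ih, hlaw, gammaMeasure_conv_gammaMeasure (by positivity) ha hr]
    push_cast
    ring_nf

lemma measurable_renewalTime (hmeas : ∀ i, Measurable (X i)) (n : ℕ) :
    Measurable (renewalTime X n) :=
  Finset.measurable_sum _ fun i _ => hmeas i

lemma measure_renewalTime_le_le_prod (hindep : iIndepFun X μ) (hnonneg : ∀ i, 0 ≤ᵐ[μ] X i)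
    (n : ℕ) (t : ℝ) :
    μ {ω | renewalTime X n ω ≤ t} ≤ ∏ i ∈ Finset.range n, μ {ω | X i ω ≤ t} := by
  rw [← hindep.meas_biInter (s := fun i => {ω | X i ω ≤ t}) fun i _ =>
    ⟨Iic t, measurableSet_Iic, rfl⟩]
  refine measure_mono_ae ?_
  filter_upwards [ae_all_iff.2 hnonneg] with ω hω hle
  exact mem_iInter₂.2 fun i hi => (Finset.single_le_sum (fun j _ => hω j) hi).trans hle

lemma ae_exists_lt_renewalTime {t : ℝ} (hsum : ∑' n, μ {ω | renewalTime X n ω ≤ t} ≠ ∞) :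
    ∀ᵐ ω ∂μ, ∃ n, t < renewalTime X n ω := by
  filter_upwards [ae_eventually_notMem hsum] with ω hω
  obtain ⟨n, hn⟩ := hω.exists
  exact ⟨n, not_le.1 hn⟩

theorem integral_neg_one_pow_renewalCount [IsProbabilityMeasure μ]
    (hmeas : ∀ i, Measurable (X i)) (hnonneg : ∀ i, 0 ≤ᵐ[μ] X i) {t : ℝ}
    (hsum : ∑' n, μ {ω | renewalTime X n ω ≤ t} ≠ ∞) :
    ∫ ω, (-1 : ℝ) ^ renewalCount X t ω ∂μ =
      1 + 2 * ∑' k : ℕ, (-1 : ℝ) ^ (k + 1) * μ.real {ω | renewalTime X (k + 1) ω ≤ t} := by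
  set A : ℕ → Set Ω := fun k => {ω | renewalTime X (k + 1) ω ≤ t}
  have hA : ∀ k, MeasurableSet (A k) := fun k =>
    measurableSet_le (measurable_renewalTime hmeas _) measurable_const
  set F : ℕ → Ω → ℝ := fun n ω =>
    1 + 2 * ∑ k ∈ Finset.range n, (A k).indicator (fun _ => (-1 : ℝ) ^ (k + 1)) ω
  have hF : ∀ᵐ ω ∂μ, ∀ n, F n ω = (-1) ^ min n (renewalCount X t ω) := by
    filter_upwards [ae_all_iff.2 hnonneg, ae_exists_lt_renewalTime hsum] with ω hX hfin n
    exact one_add_two_mul_sum_indicator_eq_neg_one_pow_min hX hfin n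
  have hF_int : ∀ n, ∫ ω, F n ω ∂μ =
      1 + 2 * ∑ k ∈ Finset.range n, (-1 : ℝ) ^ (k + 1) * μ.real (A k) := by
    intro n
    have hint : ∀ k, Integrable ((A k).indicator fun _ => (-1 : ℝ) ^ (k + 1)) μ := fun k =>
      (integrable_const _).indicator (hA k)
    rw [integral_add (integrable_const 1)
        ((integrable_finsetSum _ fun k _ => hint k).const_mul 2), integral_const_mul,
      integral_finsetSum _ fun k _ => hint k]
    simp [integral_indicator_const _ (hA _), mul_comm]
  have hsummable : Summable fun k => (-1 : ℝ) ^ (k + 1) * μ.real (A k) := by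
    refine Summable.of_norm_bounded ((summable_nat_add_iff 1).2 (ENNReal.summable_toReal hsum))
      fun k => ?_
    simp [A, measureReal_def]
  have hlim : Tendsto (fun n => ∫ ω, F n ω ∂μ) atTop
      (𝓝 (∫ ω, (-1 : ℝ) ^ renewalCount X t ω ∂μ)) := by
    refine tendsto_integral_of_dominated_convergence (fun _ => 1)
      (fun n => (measurable_const.add ((Finset.measurable_sum _ fun k _ =>
        measurable_const.indicator (hA k)).const_mul 2)).aestronglyMeasurable) (integrable_const 1)
      (fun n => hF.mono fun ω hω => by simp [hω n]) (hF.mono fun ω hω => ?_)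
    refine tendsto_atTop_of_eventually_const (i₀ := renewalCount X t ω) fun n hn => ?_
    rw [hω n, min_eq_right hn]
  simp_rw [hF_int] at hlim
  exact tendsto_nhds_unique hlim
    (tendsto_const_nhds.add (hsummable.hasSum.tendsto_sum_nat.const_mul 2))

end Probability

/-- for the renewal counting process with i.i.d. Gamma(λ, α) inter-renewal
times, `E[(-1)^{N_t}] = 1 + 2 Σ_{k=1}^∞ (-1)^k P(kα, λ t)`. -/
theorem parity_mean_gamma {Ω : Type*} [MeasurableSpace Ω]
    (prob : Measure Ω) [IsProbabilityMeasure prob]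
    (l α : ℝ) (hl : 0 < l) (hα : 0 < α)
    (X : ℕ → Ω → ℝ) (hmeas : ∀ i, Measurable (X i))
    (hindep : iIndepFun X prob)
    (hlaw : ∀ i, Measure.map (X i) prob = gammaMeasure α l)
    (t : ℝ) (ht : 0 ≤ t) :
    ∫ ω, ((-1 : ℝ)) ^ (renewalCount X t ω) ∂prob =
      1 + 2 * ∑' k : ℕ, (-1 : ℝ) ^ (k + 1) * regGamma (((k : ℝ) + 1) * α) (l * t) := by
  have hX_le : ∀ i, prob {ω | X i ω ≤ t} = gammaMeasure α l (Iic t) := fun i => by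
    rw [← hlaw i, Measure.map_apply (hmeas i) measurableSet_Iic]
    rfl
  have hnonneg : ∀ i, 0 ≤ᵐ[prob] X i := fun i => by
    rw [EventuallyLE, ae_iff, ← gammaMeasure_Iio_zero (a := α) (r := l), ← hlaw i,
      Measure.map_apply (hmeas i) measurableSet_Iio]
    simp [preimage, not_le]
  have hgeom : ∀ n, prob {ω | renewalTime X n ω ≤ t} ≤ gammaMeasure α l (Iic t) ^ n := fun n =>
    (measure_renewalTime_le_le_prod hindep hnonneg n t).trans_eq (by simp [hX_le])
  have hsum : ∑' n, prob {ω | renewalTime X n ω ≤ t} ≠ ∞ := by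
    refine ne_top_of_le_ne_top ?_ (ENNReal.tsum_le_tsum hgeom)
    rw [ENNReal.tsum_geometric]
    exact ENNReal.inv_ne_top.2 (tsub_pos_iff_lt.2 (gammaMeasure_Iic_lt_one hα hl t)).ne'
  rw [integral_neg_one_pow_renewalCount hmeas hnonneg hsum]
  congr 3 with k
  have hset :
      {ω | renewalTime X (k + 1) ω ≤ t} = (∑ i ∈ Finset.range (k + 1), X i) ⁻¹' Iic t := by
    rw [renewalTime_eq_sum]
    rfl
  have := isProbabilityMeasure_gammaMeasure (a := (k + 1) * α) (by positivity) hl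
  rw [hset, ← map_measureReal_apply (by fun_prop) measurableSet_Iic,
    hindep.map_sum_range_eq_gammaMeasure hα hl hmeas hlaw, ← cdf_eq_real,
    cdf_gammaMeasure (by positivity) hl ht]
end
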